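/- arXiv:2110.02927 — 2 statements merged into one kernel-verified Lean document; each statement's English description precedes it below -/
import Mathlib

section
/- Let Z_1, ..., Z_N be points in ℝ^d, and let {U_1, ..., U_n} and {V_1, ..., V_{N-n}} be a partition of {Z_1, ..., Z_N} into two disjoint sets of sizes n and N−n respectively, with 0 < n < N. Write γ = n/N. Then ED(n,N) = (1 − γ)^2 · ED(n, N−n), where ED(n,N) = (2/(nN)) Σ_{i=1}^{n} Σ_{j=1}^{N} ‖U_i − Z_j‖₂ − (1/n²) Σ_{i=1}^{n} Σ_{j=1}^{n} ‖U_i − U_j‖₂ − (1/N²) Σ_{i=1}^{N} Σ_{j=1}^{N} ‖Z_i − Z_j‖₂ is the empirical energy distance between {U_i} and the full set {Z_j}, and ED(n, N−n) = (2/(n(N−n))) Σ_{i=1}^{n} Σ_{j=1}^{N−n} ‖U_i − V_j‖₂ − (1/n²) Σ_{i=1}^{n} Σ_{j=1}^{n} ‖U_i − U_j‖₂ − (1/(N−n)²) Σ_{i=1}^{N−n} Σ_{j=1}^{N−n} ‖V_i − V_j‖₂ is the empirical energy distance between the two parts. -/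
open Finset

/-- Proposition 1 (Twinning paper): if `{U_i}` and `{V_j}` partition the dataset
`{Z_1, …, Z_N}` into two disjoint parts of sizes `n` and `N - n` (witnessed by a
bijection of index sets), then the empirical energy distance between `{U_i}` and the
full dataset equals `(1 - γ)^2` times the empirical energy distance between the two
parts, where `γ = n / N`. -/
theorem energy_distance_full_eq_split
    (d N n : ℕ) (hn : 0 < n) (hnN : n < N)
    (Z : Fin N → EuclideanSpace ℝ (Fin d))
    (U : Fin n → EuclideanSpace ℝ (Fin d))
    (V : Fin (N - n) → EuclideanSpace ℝ (Fin d))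
    (σ : Fin n ⊕ Fin (N - n) ≃ Fin N)
    (hU : ∀ i, Z (σ (Sum.inl i)) = U i)
    (hV : ∀ j, Z (σ (Sum.inr j)) = V j) :
    (2 / ((n : ℝ) * N)) * ∑ i : Fin n, ∑ j : Fin N, ‖U i - Z j‖
      - (1 / (n : ℝ)^2) * ∑ i : Fin n, ∑ j : Fin n, ‖U i - U j‖
      - (1 / (N : ℝ)^2) * ∑ i : Fin N, ∑ j : Fin N, ‖Z i - Z j‖
    = (1 - (n : ℝ) / N)^2 *
      ((2 / ((n : ℝ) * ((N : ℝ) - n))) * ∑ i : Fin n, ∑ j : Fin (N - n), ‖U i - V j‖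
        - (1 / (n : ℝ)^2) * ∑ i : Fin n, ∑ j : Fin n, ‖U i - U j‖
        - (1 / ((N : ℝ) - n)^2) * ∑ i : Fin (N - n), ∑ j : Fin (N - n), ‖V i - V j‖) := by
  have hZ : ∀ f : EuclideanSpace ℝ (Fin d) → ℝ,
      ∑ j : Fin N, f (Z j)
        = ∑ j : Fin n, f (U j) + ∑ j : Fin (N - n), f (V j) := by
    intro f
    rw [← Equiv.sum_comp σ (fun j => f (Z j)), Fintype.sum_sum_type]
    simp [hU, hV]
  set A := ∑ i : Fin n, ∑ j : Fin n, ‖U i - U j‖ with hA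
  set B := ∑ i : Fin n, ∑ j : Fin (N - n), ‖U i - V j‖ with hB
  set C := ∑ i : Fin (N - n), ∑ j : Fin (N - n), ‖V i - V j‖ with hC
  have hBsymm : ∑ i : Fin (N - n), ∑ j : Fin n, ‖V i - U j‖ = B := by
    rw [Finset.sum_comm, hB]
    simp [norm_sub_rev]
  have h1 : ∑ i : Fin n, ∑ j : Fin N, ‖U i - Z j‖ = A + B := by
    rw [hA, hB, ← Finset.sum_add_distrib]
    exact Finset.sum_congr rfl fun i _ => hZ (fun z => ‖U i - z‖)
  have h2 : ∑ i : Fin N, ∑ j : Fin N, ‖Z i - Z j‖ = A + 2 * B + C := by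
    rw [hZ (fun z => ∑ j : Fin N, ‖z - Z j‖)]
    have e1 : ∀ i : Fin n, ∑ j : Fin N, ‖U i - Z j‖
        = (∑ j : Fin n, ‖U i - U j‖) + ∑ j : Fin (N - n), ‖U i - V j‖ :=
      fun i => hZ (fun z => ‖U i - z‖)
    have e2 : ∀ i : Fin (N - n), ∑ j : Fin N, ‖V i - Z j‖
        = (∑ j : Fin n, ‖V i - U j‖) + ∑ j : Fin (N - n), ‖V i - V j‖ :=
      fun i => hZ (fun z => ‖V i - z‖)
    simp_rw [e1, e2]
    rw [Finset.sum_add_distrib, Finset.sum_add_distrib, ← hA, ← hB, ← hC, hBsymm]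
    ring
  rw [h1, h2]
  have hn' : (n : ℝ) ≠ 0 := Nat.cast_ne_zero.mpr hn.ne'
  have hN' : (N : ℝ) ≠ 0 := Nat.cast_ne_zero.mpr (by omega)
  have hm' : (N : ℝ) - n ≠ 0 := by
    have : (n : ℝ) < N := by exact_mod_cast hnN
    linarith
  field_simp
  ring
end

section
/- Let Z_1, ..., Z_N be points in ℝ^d and fix 0 < n < N. For a subset S ⊆ {1,...,N} with |S| = n, let ED_full(S) denote the empirical energy distance between the points indexed by S and the full collection {Z_1,...,Z_N}, and let ED_split(S) denote the empirical energy distance between the points indexed by S and the points indexed by the complement {1,...,N} \ S. Then a size-n subset S* minimizes ED_full over all size-n subsets if and only if S* minimizes ED_split over all size-n subsets; that is, the minimizers of the two objectives coincide. -/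
open Finset

/-- Consequence of Proposition 1 (Twinning paper): for a fixed dataset
`Z_1, …, Z_N` in ℝ^d and `0 < n < N`, a size-`n` index set `S*` minimizes the
empirical energy distance between `{Z_i : i ∈ S}` and the full dataset over all
size-`n` subsets if and only if it minimizes the empirical energy distance between
`{Z_i : i ∈ S}` and `{Z_j : j ∉ S}` over all size-`n` subsets. -/
theorem energy_full_argmin_iff_split_argmin
    (d N n : ℕ) (hn : 0 < n) (hnN : n < N)
    (Z : Fin N → EuclideanSpace ℝ (Fin d))
    (EDfull EDsplit : Finset (Fin N) → ℝ)
    (hEDfull : ∀ S : Finset (Fin N),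
      EDfull S = (2 / ((n : ℝ) * N)) * ∑ i ∈ S, ∑ j : Fin N, ‖Z i - Z j‖
        - (1 / (n : ℝ)^2) * ∑ i ∈ S, ∑ j ∈ S, ‖Z i - Z j‖
        - (1 / (N : ℝ)^2) * ∑ i : Fin N, ∑ j : Fin N, ‖Z i - Z j‖)
    (hEDsplit : ∀ S : Finset (Fin N),
      EDsplit S = (2 / ((n : ℝ) * ((N : ℝ) - n))) * ∑ i ∈ S, ∑ j ∈ Sᶜ, ‖Z i - Z j‖
        - (1 / (n : ℝ)^2) * ∑ i ∈ S, ∑ j ∈ S, ‖Z i - Z j‖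
        - (1 / ((N : ℝ) - n)^2) * ∑ i ∈ Sᶜ, ∑ j ∈ Sᶜ, ‖Z i - Z j‖)
    (Sstar : Finset (Fin N)) (hSstar : Sstar.card = n) :
    (∀ S : Finset (Fin N), S.card = n → EDfull Sstar ≤ EDfull S) ↔
    (∀ S : Finset (Fin N), S.card = n → EDsplit Sstar ≤ EDsplit S) := by
  have hn' : (0 : ℝ) < n := by exact_mod_cast hn
  have hN' : (0 : ℝ) < N := by
    exact_mod_cast lt_trans hn hnN
  have hm : (0 : ℝ) < (N : ℝ) - n := by
    have : (n : ℝ) < N := by exact_mod_cast hnN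
    linarith
  set c : ℝ := ((N : ℝ) / ((N : ℝ) - n)) ^ 2 with hc
  have hcpos : 0 < c := by positivity
  have key : ∀ S : Finset (Fin N), EDsplit S = c * EDfull S := by
    intro S
    rw [hEDsplit, hEDfull]
    have h1 : ∀ (f : Fin N → ℝ), ∑ j ∈ Sᶜ, f j = ∑ j : Fin N, f j - ∑ j ∈ S, f j := by
      intro f
      rw [eq_sub_iff_add_eq, Finset.sum_compl_add_sum]
    have hcross : ∑ i ∈ S, ∑ j ∈ Sᶜ, ‖Z i - Z j‖
        = ∑ i ∈ S, ∑ j : Fin N, ‖Z i - Z j‖ - ∑ i ∈ S, ∑ j ∈ S, ‖Z i - Z j‖ := by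
      rw [← Finset.sum_sub_distrib]
      exact Finset.sum_congr rfl fun i _ => h1 _
    have hAct : ∑ i : Fin N, ∑ j ∈ S, ‖Z i - Z j‖
        = ∑ i ∈ S, ∑ j : Fin N, ‖Z i - Z j‖ := by
      rw [Finset.sum_comm]
      exact Finset.sum_congr rfl fun i _ => Finset.sum_congr rfl fun j _ => norm_sub_rev _ _
    have hcomp : ∑ i ∈ Sᶜ, ∑ j ∈ Sᶜ, ‖Z i - Z j‖
        = ∑ i : Fin N, ∑ j : Fin N, ‖Z i - Z j‖
          - 2 * ∑ i ∈ S, ∑ j : Fin N, ‖Z i - Z j‖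
          + ∑ i ∈ S, ∑ j ∈ S, ‖Z i - Z j‖ := by
      have e1 : ∑ i ∈ Sᶜ, ∑ j ∈ Sᶜ, ‖Z i - Z j‖
          = ∑ i ∈ Sᶜ, (∑ j : Fin N, ‖Z i - Z j‖ - ∑ j ∈ S, ‖Z i - Z j‖) :=
        Finset.sum_congr rfl fun i _ => h1 _
      rw [e1, Finset.sum_sub_distrib, h1 (fun i => ∑ j : Fin N, ‖Z i - Z j‖),
        h1 (fun i => ∑ j ∈ S, ‖Z i - Z j‖), hAct]
      ring
    rw [hcross, hcomp, hc]
    field_simp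
    ring
  constructor
  · intro h S hS
    rw [key, key]
    exact mul_le_mul_of_nonneg_left (h S hS) hcpos.le
  · intro h S hS
    have := h S hS
    rw [key, key] at this
    exact le_of_mul_le_mul_left this hcpos
end
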